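/- arXiv:0803.2821 — 3 statements merged into one kernel-verified Lean document; each statement's English description precedes it below -/
import Mathlib

section
/- Let f : ℝ₊ˣ → ℝ be continuous, with f(x) = O(x^{-A}) as x → +∞ for every A > 0, and f(x) = O(x^{-c}) as x → 0⁺ for some c > 0. Fix ε = ±1 and set h(x) = f(x) - ε x⁻¹ f(x⁻¹). Then for every s with Re(s) > c, the Mellin transform M(f)(s) = ∫₀^∞ f(x) x^{s-1} dx converges absolutely and satisfies M(f)(s) = ∫₁^∞ f(x) x^{s-1} dx + ε ∫₁^∞ f(x) x^{-s} dx + ∫₀¹ h(x) x^{s-1} dx. -/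
/-!
Split `(0, ∞)` at `1`. On `(0, 1]` write `f x = h x + ε x⁻¹ f (x⁻¹)`; the substitution
`x ↦ x⁻¹` turns `∫₀¹ x⁻¹ f (x⁻¹) x^(s-1) dx` into `∫₁^∞ f x x^(-s) dx`, which converges for every
`s` by the rapid decay of `f`. Absolute convergence near `0` comes from `|f x| ≤ C x^(-c)` with
`c < Re s`.
-/

open MeasureTheory Set Complex

section ChangeOfVariables

variable {E : Type*} [NormedAddCommGroup E] [NormedSpace ℝ E]

lemma image_inv_Ioo_zero_one : (·⁻¹) '' Ioo (0 : ℝ) 1 = Ioi 1 := by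
  rw [image_inv_eq_inv, inv_Ioo_0_left one_pos, inv_one]

lemma hasDerivWithinAt_inv_Ioo_zero_one {x : ℝ} (hx : x ∈ Ioo (0 : ℝ) 1) :
    HasDerivWithinAt (·⁻¹) (-(x ^ 2)⁻¹) (Ioo 0 1) x :=
  (hasDerivAt_inv hx.1.ne').hasDerivWithinAt

lemma integrableOn_Ioi_one_iff_integrableOn_Ioo_comp_inv (g : ℝ → E) :
    IntegrableOn g (Ioi 1) ↔ IntegrableOn (fun x ↦ (x ^ 2)⁻¹ • g x⁻¹) (Ioo 0 1) := by
  rw [← image_inv_Ioo_zero_one, integrableOn_image_iff_integrableOn_abs_deriv_smul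
    measurableSet_Ioo (fun _ ↦ hasDerivWithinAt_inv_Ioo_zero_one) inv_injective.injOn]
  simp only [abs_neg, abs_inv, abs_pow, sq_abs]

lemma integral_Ioi_one_eq_integral_Ioo_comp_inv (g : ℝ → E) :
    ∫ x in Ioi 1, g x = ∫ x in Ioo 0 1, (x ^ 2)⁻¹ • g x⁻¹ := by
  rw [← image_inv_Ioo_zero_one, integral_image_eq_integral_abs_deriv_smul
    measurableSet_Ioo (fun _ ↦ hasDerivWithinAt_inv_Ioo_zero_one) inv_injective.injOn]
  simp only [abs_neg, abs_inv, abs_pow, sq_abs]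

end ChangeOfVariables

lemma inv_sq_smul_ofReal_inv_cpow_neg {x : ℝ} (hx : 0 < x) (s : ℂ) :
    (x ^ 2)⁻¹ • ((x⁻¹ : ℝ) : ℂ) ^ (-s) = ((x⁻¹ : ℝ) : ℂ) * (x : ℂ) ^ (s - 1) := by
  have hx' : (x : ℂ) ≠ 0 := ofReal_ne_zero.2 hx.ne'
  have harg : (x : ℂ).arg ≠ Real.pi := by
    rw [arg_ofReal_of_nonneg hx.le]; exact Real.pi_ne_zero.symm
  rw [ofReal_inv, inv_cpow _ _ harg, cpow_neg, inv_inv, cpow_sub _ _ hx', cpow_one, real_smul]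
  push_cast
  field_simp

section OfRealMulCpow

variable {f : ℝ → ℝ}

lemma continuousOn_ofReal_mul_cpow {s : Set ℝ} (hf : ContinuousOn f s) (hs : s ⊆ Ioi 0) (w : ℂ) :
    ContinuousOn (fun x : ℝ ↦ (f x : ℂ) * (x : ℂ) ^ w) s :=
  (continuous_ofReal.comp_continuousOn hf).mul <|
    continuous_ofReal.continuousOn.cpow_const fun _ hx ↦ ofReal_mem_slitPlane.2 (hs hx)

lemma norm_ofReal_mul_cpow_le {x C a : ℝ} (hx : 0 < x) (hfx : |f x| ≤ C * x ^ (-a)) (w : ℂ) :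
    ‖(f x : ℂ) * (x : ℂ) ^ w‖ ≤ C * x ^ (w.re - a) := by
  rw [norm_mul, norm_real, Real.norm_eq_abs, norm_cpow_eq_rpow_re_of_pos hx, sub_eq_neg_add,
    Real.rpow_add hx, ← mul_assoc]
  exact mul_le_mul_of_nonneg_right hfx (Real.rpow_nonneg hx.le _)

lemma integrableOn_Ioc_zero_one_ofReal_mul_cpow {w : ℂ} {C a : ℝ}
    (hf : ContinuousOn f (Ioc 0 1)) (hbound : ∀ x ∈ Ioc (0 : ℝ) 1, |f x| ≤ C * x ^ (-a))
    (hw : a - 1 < w.re) :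
    IntegrableOn (fun x : ℝ ↦ (f x : ℂ) * (x : ℂ) ^ w) (Ioc 0 1) := by
  refine Integrable.mono' (g := fun x ↦ C * x ^ (w.re - a))
    ((intervalIntegral.intervalIntegrable_rpow' (by linarith)).1.const_mul C)
    ((continuousOn_ofReal_mul_cpow hf Ioc_subset_Ioi_self w).aestronglyMeasurable
      measurableSet_Ioc) ?_
  filter_upwards [ae_restrict_mem measurableSet_Ioc] with x hx
  exact norm_ofReal_mul_cpow_le hx.1 (hbound x hx) w

lemma integrableOn_Ioi_one_ofReal_mul_cpow {w : ℂ} {C A : ℝ}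
    (hf : ContinuousOn f (Ioi 1)) (hbound : ∀ x : ℝ, 1 ≤ x → |f x| ≤ C * x ^ (-A))
    (hw : w.re < A - 1) :
    IntegrableOn (fun x : ℝ ↦ (f x : ℂ) * (x : ℂ) ^ w) (Ioi 1) := by
  refine Integrable.mono' (g := fun x ↦ C * x ^ (w.re - A))
    ((integrableOn_Ioi_rpow_of_lt (by linarith) one_pos).const_mul C)
    ((continuousOn_ofReal_mul_cpow hf (Ioi_subset_Ioi zero_le_one) w).aestronglyMeasurable
      measurableSet_Ioi) ?_
  filter_upwards [ae_restrict_mem measurableSet_Ioi] with x hx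
  exact norm_ofReal_mul_cpow_le (zero_lt_one.trans hx) (hbound x hx.le) w

lemma eqOn_inv_mul_comp_inv_cpow (s : ℂ) :
    EqOn (fun x : ℝ ↦ ((x⁻¹ * f x⁻¹ : ℝ) : ℂ) * (x : ℂ) ^ (s - 1))
      (fun x ↦ (x ^ 2)⁻¹ • ((f x⁻¹ : ℂ) * ((x⁻¹ : ℝ) : ℂ) ^ (-s))) (Ioo 0 1) := by
  intro x hx
  dsimp only
  rw [← mul_smul_comm, inv_sq_smul_ofReal_inv_cpow_neg hx.1]
  push_cast
  ring

lemma integrableOn_Ioc_zero_one_inv_mul_comp_inv_iff (s : ℂ) :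
    IntegrableOn (fun x : ℝ ↦ ((x⁻¹ * f x⁻¹ : ℝ) : ℂ) * (x : ℂ) ^ (s - 1)) (Ioc 0 1) ↔
      IntegrableOn (fun x : ℝ ↦ (f x : ℂ) * (x : ℂ) ^ (-s)) (Ioi 1) := by
  rw [integrableOn_Ioc_iff_integrableOn_Ioo, integrableOn_congr_fun (eqOn_inv_mul_comp_inv_cpow s)
    measurableSet_Ioo, integrableOn_Ioi_one_iff_integrableOn_Ioo_comp_inv]

lemma integral_Ioc_zero_one_inv_mul_comp_inv (s : ℂ) :
    ∫ x in Ioc (0 : ℝ) 1, ((x⁻¹ * f x⁻¹ : ℝ) : ℂ) * (x : ℂ) ^ (s - 1) =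
      ∫ x in Ioi (1 : ℝ), (f x : ℂ) * (x : ℂ) ^ (-s) := by
  rw [integral_Ioc_eq_integral_Ioo, setIntegral_congr_fun measurableSet_Ioo
    (eqOn_inv_mul_comp_inv_cpow s), integral_Ioi_one_eq_integral_Ioo_comp_inv]

end OfRealMulCpow

theorem stmt_2_general (f : ℝ → ℝ) (c : ℝ) (ε : ℝ)
    (hcont : ContinuousOn f (Set.Ioi 0))
    (hdecay : ∀ A : ℝ, 0 < A → ∃ C : ℝ, ∀ x : ℝ, 1 ≤ x → |f x| ≤ C * x ^ (-A))
    (h0 : ∃ C : ℝ, ∀ x ∈ Set.Ioc (0:ℝ) 1, |f x| ≤ C * x ^ (-c))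
    (h : ℝ → ℝ) (hdef : ∀ x : ℝ, 0 < x → h x = f x - ε * x⁻¹ * f x⁻¹)
    (s : ℂ) (hs : c < s.re) :
    MeasureTheory.IntegrableOn (fun x : ℝ => (f x : ℂ) * (x:ℂ) ^ (s-1)) (Set.Ioi 0) ∧
    ∫ x in Set.Ioi (0:ℝ), (f x : ℂ) * (x:ℂ) ^ (s-1) =
      (∫ x in Set.Ioi (1:ℝ), (f x : ℂ) * (x:ℂ) ^ (s-1)) +
      (ε:ℂ) * (∫ x in Set.Ioi (1:ℝ), (f x : ℂ) * (x:ℂ) ^ (-s)) +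
      ∫ x in Set.Ioc (0:ℝ) 1, (h x : ℂ) * (x:ℂ) ^ (s-1) := by
  obtain ⟨C₀, hC₀⟩ := h0
  -- a single decay exponent covers both `s - 1` and `-s`
  obtain ⟨C, hC⟩ := hdecay (|s.re| + 2) (by positivity)
  have hcont₁ : ContinuousOn f (Ioi 1) := hcont.mono (Ioi_subset_Ioi zero_le_one)
  have hint₀ := integrableOn_Ioc_zero_one_ofReal_mul_cpow (w := s - 1)
    (hcont.mono Ioc_subset_Ioi_self) hC₀ (by rw [sub_re, one_re]; linarith)
  have hint₁ := integrableOn_Ioi_one_ofReal_mul_cpow (w := s - 1) hcont₁ hC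
    (by rw [sub_re, one_re]; linarith [le_abs_self s.re])
  have hint₂ := integrableOn_Ioi_one_ofReal_mul_cpow (w := -s) hcont₁ hC
    (by rw [neg_re]; linarith [neg_abs_le s.re])
  have hrefl := (integrableOn_Ioc_zero_one_inv_mul_comp_inv_iff s).2 hint₂
  have hsplit : ∫ x in Ioc (0 : ℝ) 1, (h x : ℂ) * (x : ℂ) ^ (s - 1) =
      (∫ x in Ioc (0 : ℝ) 1, (f x : ℂ) * (x : ℂ) ^ (s - 1)) -
        ε * ∫ x in Ioc (0 : ℝ) 1, ((x⁻¹ * f x⁻¹ : ℝ) : ℂ) * (x : ℂ) ^ (s - 1) := by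
    rw [← integral_const_mul, ← integral_sub hint₀ (hrefl.const_mul _)]
    refine setIntegral_congr_fun measurableSet_Ioc fun x hx ↦ ?_
    rw [hdef x hx.1]
    push_cast
    ring
  rw [← Ioc_union_Ioi_eq_Ioi zero_le_one]
  refine ⟨hint₀.union hint₁, ?_⟩
  rw [setIntegral_union (Ioc_disjoint_Ioi le_rfl) measurableSet_Ioi hint₀ hint₁, hsplit,
    integral_Ioc_zero_one_inv_mul_comp_inv]
  ring

theorem stmt_2 (f : ℝ → ℝ) (c : ℝ) (hc : 0 < c) (ε : ℝ) (hε : ε = 1 ∨ ε = -1)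
    (hcont : ContinuousOn f (Set.Ioi 0))
    (hdecay : ∀ A : ℝ, 0 < A → ∃ C : ℝ, ∀ x : ℝ, 1 ≤ x → |f x| ≤ C * x ^ (-A))
    (h0 : ∃ C : ℝ, ∀ x ∈ Set.Ioc (0:ℝ) 1, |f x| ≤ C * x ^ (-c))
    (h : ℝ → ℝ) (hdef : ∀ x : ℝ, 0 < x → h x = f x - ε * x⁻¹ * f x⁻¹)
    (s : ℂ) (hs : c < s.re) :
    MeasureTheory.IntegrableOn (fun x : ℝ => (f x : ℂ) * (x:ℂ) ^ (s-1)) (Set.Ioi 0) ∧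
    ∫ x in Set.Ioi (0:ℝ), (f x : ℂ) * (x:ℂ) ^ (s-1) =
      (∫ x in Set.Ioi (1:ℝ), (f x : ℂ) * (x:ℂ) ^ (s-1)) +
      (ε:ℂ) * (∫ x in Set.Ioi (1:ℝ), (f x : ℂ) * (x:ℂ) ^ (-s)) +
      ∫ x in Set.Ioc (0:ℝ) 1, (h x : ℂ) * (x:ℂ) ^ (s-1) :=
  stmt_2_general f c ε hcont hdecay h0 h hdef s hs
end

section
/- Let f : (0, ∞) → ℝ be measurable, and suppose there exists x₀ > 0 such that f has constant sign on (x₀, ∞) (i.e. f ≥ 0 there or f ≤ 0 there). Suppose the abscissa of convergence σ_c of the Laplace transform L(f)(s) = ∫₀^∞ f(x) e^{-sx} dx is finite. Then L(f) has a singularity at s = σ_c; that is, L(f) cannot be continued to a function holomorphic in a neighbourhood of σ_c. -/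
/-!
Landau's argument. Since `f` is eventually of one sign, the Laplace integral converges absolutely
for `Re s > σc`, so `L f(s) = ∫₀^∞ f(x) e^{-sx} dx` is holomorphic there, and at a real point
`a = σc + ε` its Taylor series has the coefficients `∫ f(x) e^{-ax} (-x)^n / n! dx`.
If `L f` continued holomorphically to a disc around `σc`, this series would still converge at a
real point `a - r < σc`, where its terms are `∫ f(x) e^{-ax} (rx)^n / n! dx`. Apart from the
contribution of the bounded interval `(0, x₀]`, these are integrals of nonnegative functions, so
by monotone convergence the series may be summed under the integral sign: `∫ f(x) e^{-(a-r)x} dx`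
converges, contradicting the definition of `σc`.
-/

open MeasureTheory Set Filter Topology
open scoped ENNReal NNReal Nat

theorem integrable_iff_summable_integral_of_hasSum {α : Type*} [MeasurableSpace α]
    {μ : Measure α} {F : ℕ → α → ℝ} {g : α → ℝ}
    (hF : ∀ n, AEStronglyMeasurable (F n) μ) (hF₀ : ∀ n, 0 ≤ᵐ[μ] F n)
    (hg : ∀ᵐ x ∂μ, HasSum (fun n => F n x) (g x)) :
    Integrable g μ ↔ (∀ n, Integrable (F n) μ) ∧ Summable fun n => ∫ x, F n x ∂μ := by
  have hF₀' : ∀ᵐ x ∂μ, ∀ n, 0 ≤ F n x := ae_all_iff.2 hF₀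
  have hgm : AEStronglyMeasurable g μ :=
    aestronglyMeasurable_of_tendsto_ae atTop
      (fun N => Finset.aestronglyMeasurable_fun_sum _ fun n _ => hF n)
      (hg.mono fun x hx => hx.tendsto_sum_nat)
  have hg₀ : 0 ≤ᵐ[μ] g := by
    filter_upwards [hg, hF₀'] with x hx h₀ using hx.nonneg h₀
  have hlint :
      ∫⁻ x, ENNReal.ofReal (g x) ∂μ = ∑' n, ∫⁻ x, ENNReal.ofReal (F n x) ∂μ := by
    rw [← lintegral_tsum fun n => (hF n).aemeasurable.ennreal_ofReal]
    refine lintegral_congr_ae ?_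
    filter_upwards [hg, hF₀'] with x hx h₀
    rw [← ENNReal.ofReal_tsum_of_nonneg h₀ hx.summable, hx.tsum_eq]
  rw [← lintegral_ofReal_ne_top_iff_integrable hgm hg₀, hlint]
  constructor
  · intro hfin
    have hint : ∀ n, Integrable (F n) μ := fun n =>
      (lintegral_ofReal_ne_top_iff_integrable (hF n) (hF₀ n)).1
        (ENNReal.ne_top_of_tsum_ne_top hfin n)
    refine ⟨hint, (ENNReal.summable_toReal hfin).congr fun n => ?_⟩
    rw [← ofReal_integral_eq_lintegral_ofReal (hint n) (hF₀ n),
      ENNReal.toReal_ofReal (integral_nonneg_of_ae (hF₀ n))]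
  · rintro ⟨hint, hsum⟩
    simp_rw [← ofReal_integral_eq_lintegral_ofReal (hint _) (hF₀ _)]
    rw [← ENNReal.ofReal_tsum_of_nonneg (fun n => integral_nonneg_of_ae (hF₀ n)) hsum]
    exact ENNReal.ofReal_ne_top

theorem hasSum_mul_pow_mul_div_factorial (c x r : ℝ) :
    HasSum (fun n => c * x ^ n * (r ^ n / n !)) (c * Real.exp (r * x)) := by
  have h := (NormedSpace.expSeries_div_hasSum_exp (r * x)).mul_left c
  rw [← Real.exp_eq_exp_ℝ] at h
  have e : (fun n : ℕ => c * x ^ n * (r ^ n / n !)) = fun n => c * ((r * x) ^ n / n !) := by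
    ext n
    rw [mul_pow]
    ring
  rwa [e]

theorem integrableOn_mul_exp_iff {u : ℝ → ℝ} {s : Set ℝ} {r : ℝ} (hu : Measurable u)
    (hs : MeasurableSet s) (hs₀ : s ⊆ Ici 0) (hu₀ : ∀ x ∈ s, 0 ≤ u x) (hr : 0 < r) :
    IntegrableOn (fun x => u x * Real.exp (r * x)) s ↔
      (∀ n, IntegrableOn (fun x => u x * x ^ n) s) ∧
        Summable fun n : ℕ => (∫ x in s, u x * x ^ n) * (r ^ n / n !) := by
  have hc : ∀ n : ℕ, IsUnit (r ^ n / n ! : ℝ) := fun n =>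
    (by positivity : (r ^ n / n ! : ℝ) ≠ 0).isUnit
  rw [IntegrableOn, integrable_iff_summable_integral_of_hasSum
    (F := fun n x => u x * x ^ n * (r ^ n / n !))
    (fun n => by fun_prop) (fun n => ae_restrict_of_forall_mem hs fun x hx => ?_)
    (ae_of_all _ fun x => hasSum_mul_pow_mul_div_factorial _ _ _)]
  · simp only [IntegrableOn, integrable_mul_const_iff (hc _), integral_mul_const]
  · have hx₀ : 0 ≤ x := hs₀ hx
    have hux : 0 ≤ u x := hu₀ x hx
    simp only [Pi.zero_apply]
    positivity

theorem integrableOn_mul_pow_and_summable_of_integrableOn_mul_exp {u : ℝ → ℝ} {s : Set ℝ}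
    {r : ℝ} (hu : Measurable u) (hs : MeasurableSet s) (hs₀ : s ⊆ Ici 0) (hr : 0 < r)
    (h : IntegrableOn (fun x => u x * Real.exp (r * x)) s) :
    (∀ n, IntegrableOn (fun x => u x * x ^ n) s) ∧
      Summable fun n : ℕ => (∫ x in s, |u x| * x ^ n) * (r ^ n / n !) := by
  have habs : IntegrableOn (fun x => |u x| * Real.exp (r * x)) s := by
    simpa only [IntegrableOn, abs_mul, Real.abs_exp] using h.abs
  obtain ⟨hmom, hsum⟩ :=
    (integrableOn_mul_exp_iff hu.abs hs hs₀ (fun x _ => abs_nonneg _) hr).1 habs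
  refine ⟨fun n => (hmom n).mono' (by fun_prop) (ae_restrict_of_forall_mem hs fun x hx => ?_),
    hsum⟩
  have hx₀ : (0 : ℝ) ≤ x := hs₀ hx
  rw [norm_mul, norm_pow, Real.norm_eq_abs, Real.norm_eq_abs, abs_of_nonneg hx₀]

theorem integrableOn_Ioi_mul_exp_of_summable {u : ℝ → ℝ} {x₀ r : ℝ} (hu : Measurable u)
    (hx₀ : 0 ≤ x₀) (hpos : ∀ x, x₀ < x → 0 ≤ u x) (hr : 0 < r)
    (hloc : IntegrableOn (fun x => u x * Real.exp (r * x)) (Ioc 0 x₀))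
    (hmom : ∀ n, IntegrableOn (fun x => u x * x ^ n) (Ioi 0))
    (hsum : Summable fun n : ℕ => (∫ x in Ioi 0, u x * x ^ n) * (r ^ n / n !)) :
    IntegrableOn (fun x => u x * Real.exp (r * x)) (Ioi 0) := by
  have hsplit : ∀ n : ℕ, ∫ x in Ioi 0, u x * x ^ n =
      (∫ x in Ioc 0 x₀, u x * x ^ n) + ∫ x in Ioi x₀, u x * x ^ n := fun n => by
    rw [← Ioc_union_Ioi_eq_Ioi hx₀]
    exact setIntegral_union (Ioc_disjoint_Ioi le_rfl) measurableSet_Ioi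
      ((hmom n).mono_set Ioc_subset_Ioi_self) ((hmom n).mono_set (Ioi_subset_Ioi hx₀))
  have hsum_Ioc : Summable fun n : ℕ => (∫ x in Ioc 0 x₀, u x * x ^ n) * (r ^ n / n !) := by
    obtain ⟨-, hsum_abs⟩ := integrableOn_mul_pow_and_summable_of_integrableOn_mul_exp hu
      measurableSet_Ioc (fun x hx => le_of_lt hx.1) hr hloc
    refine hsum_abs.of_norm_bounded fun n => ?_
    rw [norm_mul, Real.norm_of_nonneg (by positivity : (0 : ℝ) ≤ r ^ n / n !)]
    gcongr
    calc _ ≤ ∫ x in Ioc 0 x₀, ‖u x * x ^ n‖ := norm_integral_le_integral_norm _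
      _ = _ := setIntegral_congr_fun measurableSet_Ioc fun x hx => by
        rw [norm_mul, norm_pow, Real.norm_eq_abs, Real.norm_of_nonneg (le_of_lt hx.1)]
  have hsum_Ioi : Summable fun n : ℕ => (∫ x in Ioi x₀, u x * x ^ n) * (r ^ n / n !) :=
    (hsum.sub hsum_Ioc).congr fun n => by
      rw [hsplit]
      ring
  have htail : IntegrableOn (fun x => u x * Real.exp (r * x)) (Ioi x₀) :=
    (integrableOn_mul_exp_iff hu measurableSet_Ioi (Ioi_subset_Ici hx₀) hpos hr).2
      ⟨fun n => (hmom n).mono_set (Ioi_subset_Ioi hx₀), hsum_Ioi⟩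
  rw [← Ioc_union_Ioi_eq_Ioi hx₀]
  exact hloc.union htail

theorem integrableOn_Ioc_mul_exp_iff {u : ℝ → ℝ} {a b c : ℝ} :
    IntegrableOn (fun x => u x * Real.exp (c * x)) (Ioc a b) ↔ IntegrableOn u (Ioc a b) := by
  have key : ∀ (v : ℝ → ℝ) (c : ℝ), IntegrableOn v (Ioc a b) →
      IntegrableOn (fun x => v x * Real.exp (c * x)) (Ioc a b) := fun v c hv =>
    hv.mul_continuousOn_of_subset (by fun_prop) measurableSet_Ioc isCompact_Icc
      Ioc_subset_Icc_self
  refine ⟨fun h => ?_, key u c⟩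
  simpa only [mul_assoc, ← Real.exp_add, ← add_mul, add_neg_cancel, zero_mul, Real.exp_zero,
    mul_one] using key _ (-c) h

theorem mul_exp_neg_mul_mul_exp (u : ℝ → ℝ) (a r : ℝ) :
    (fun x => u x * Real.exp (-a * x) * Real.exp (r * x)) =
      fun x => u x * Real.exp (-(a - r) * x) := by
  ext x
  rw [mul_assoc, ← Real.exp_add]
  ring_nf

theorem tendsto_intervalIntegral_mul_exp_of_not_integrableOn {u : ℝ → ℝ} {T₀ : ℝ}
    (h : ¬ IntegrableOn u (Ioc 0 T₀)) (σ : ℝ) :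
    Tendsto (fun T => ∫ x in (0 : ℝ)..T, u x * Real.exp (-σ * x)) atTop (𝓝 0) := by
  have hT₀ : 0 ≤ T₀ := by
    by_contra! hneg
    exact h (by simp [Ioc_eq_empty_of_le hneg.le])
  refine tendsto_const_nhds.congr' ?_
  filter_upwards [eventually_ge_atTop T₀] with T hT
  refine (intervalIntegral.integral_undef fun hint => h ?_).symm
  rw [intervalIntegrable_iff_integrableOn_Ioc_of_le (hT₀.trans hT),
    integrableOn_Ioc_mul_exp_iff] at hint
  exact hint.mono_set (Ioc_subset_Ioc_right hT)

theorem integrableOn_Ioi_of_tendsto_intervalIntegral_of_nonneg {u : ℝ → ℝ} {a x₀ I : ℝ}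
    (hu : ∀ T, IntegrableOn u (Ioc a T)) (hx₀ : a ≤ x₀)
    (hpos : ∀ x, x₀ < x → 0 ≤ u x)
    (hlim : Tendsto (fun T => ∫ x in a..T, u x) atTop (𝓝 I)) :
    IntegrableOn u (Ioi a) := by
  have hii : ∀ T, a ≤ T → IntervalIntegrable u volume a T := fun T hT =>
    (intervalIntegrable_iff_integrableOn_Ioc_of_le hT).2 (hu T)
  have htail : IntegrableOn u (Ioi x₀) := by
    refine integrableOn_Ioi_of_intervalIntegral_norm_tendsto (I - ∫ x in a..x₀, u x) x₀
      (fun T => (hu T).mono_set (Ioc_subset_Ioc_left hx₀)) tendsto_id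
      ((hlim.sub_const _).congr' ?_)
    filter_upwards [eventually_ge_atTop x₀] with T hT
    rw [intervalIntegral.integral_interval_sub_left (hii T (hx₀.trans hT)) (hii x₀ hx₀),
      intervalIntegral.integral_of_le hT, intervalIntegral.integral_of_le hT]
    exact setIntegral_congr_fun measurableSet_Ioc fun x hx =>
      (Real.norm_of_nonneg (hpos x hx.1)).symm
  rw [← Ioc_union_Ioi_eq_Ioi hx₀]
  exact (hu x₀).union htail

noncomputable def laplace (f : ℝ → ℝ) (s : ℂ) : ℂ :=
  ∫ x in Ioi 0, (f x : ℂ) * Complex.exp (-s * x)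

noncomputable def laplaceSeries (f : ℝ → ℝ) (b : ℂ) : FormalMultilinearSeries ℂ ℂ ℂ :=
  fun n => ContinuousMultilinearMap.mkPiRing ℂ (Fin n)
    (∫ x in Ioi 0, (f x : ℂ) * Complex.exp (-b * x) * ((-x : ℂ) ^ n / n !))

section Laplace

variable {f : ℝ → ℝ}

theorem norm_ofReal_mul_cexp (c x : ℝ) (s : ℂ) :
    ‖(c : ℂ) * Complex.exp (-s * x)‖ = |c * Real.exp (-s.re * x)| := by
  rw [norm_mul, Complex.norm_real, Complex.norm_exp, abs_mul, Real.abs_exp, Real.norm_eq_abs]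
  simp

theorem norm_laplaceSeries_integrand (b : ℂ) {x : ℝ} (hx : 0 ≤ x) (n : ℕ) :
    ‖(f x : ℂ) * Complex.exp (-b * x) * ((-x : ℂ) ^ n / n !)‖ =
      |f x * Real.exp (-b.re * x)| * x ^ n / n ! := by
  rw [norm_mul, norm_ofReal_mul_cexp, norm_div, norm_pow, norm_neg, Complex.norm_real,
    Complex.norm_natCast, Real.norm_of_nonneg hx, mul_div_assoc]

theorem integrableOn_ofReal_mul_cexp (hf : Measurable f) {s : ℂ} {t : Set ℝ}
    (h : IntegrableOn (fun x => f x * Real.exp (-s.re * x)) t) :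
    IntegrableOn (fun x => (f x : ℂ) * Complex.exp (-s * x)) t :=
  h.norm.mono' (by fun_prop) (ae_of_all _ fun x => (norm_ofReal_mul_cexp _ _ _).le)

theorem tendsto_intervalIntegral_laplace (hf : Measurable f) {s : ℂ}
    (h : IntegrableOn (fun x => f x * Real.exp (-s.re * x)) (Ioi 0)) :
    Tendsto (fun T => ∫ x in (0 : ℝ)..T, (f x : ℂ) * Complex.exp (-s * x)) atTop
      (𝓝 (laplace f s)) :=
  intervalIntegral_tendsto_integral_Ioi 0 (integrableOn_ofReal_mul_cexp hf h) tendsto_id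

theorem hasSum_laplaceSeries_integrand (b y : ℂ) (x : ℝ) :
    HasSum (fun n : ℕ => y ^ n * ((f x : ℂ) * Complex.exp (-b * x) * ((-x : ℂ) ^ n / n !)))
      ((f x : ℂ) * Complex.exp (-(b + y) * x)) := by
  have h := (NormedSpace.expSeries_div_hasSum_exp (-x * y : ℂ)).mul_left
    ((f x : ℂ) * Complex.exp (-b * x))
  rw [← Complex.exp_eq_exp_ℂ, mul_assoc, ← Complex.exp_add,
    show -b * x + -x * y = -(b + y) * x by ring] at h
  have hterm : (fun n : ℕ => (f x : ℂ) * Complex.exp (-b * x) * ((-x * y : ℂ) ^ n / n !)) =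
      fun n => y ^ n * ((f x : ℂ) * Complex.exp (-b * x) * ((-x : ℂ) ^ n / n !)) := by
    ext n
    rw [mul_pow]
    ring
  rwa [hterm] at h

theorem laplaceSeries_apply_eq_integral (b y : ℂ) (n : ℕ) :
    laplaceSeries f b n (fun _ => y) =
      ∫ x in Ioi 0, y ^ n * ((f x : ℂ) * Complex.exp (-b * x) * ((-x : ℂ) ^ n / n !)) := by
  rw [laplaceSeries, ContinuousMultilinearMap.mkPiRing_apply, Fin.prod_const, smul_eq_mul,
    integral_const_mul]

theorem laplaceSeries_apply_neg_ofReal (a r : ℝ) (n : ℕ) :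
    laplaceSeries f a n (fun _ => -(r : ℂ)) =
      ((∫ x in Ioi 0, f x * Real.exp (-a * x) * x ^ n) * (r ^ n / n !) : ℝ) := by
  rw [laplaceSeries_apply_eq_integral, ← integral_mul_const, ← integral_complex_ofReal]
  congr 1
  ext x
  push_cast
  rw [show ((-(r : ℂ)) ^ n * (f x * Complex.exp (-a * x) * ((-x : ℂ) ^ n / n !))) =
    f x * Complex.exp (-a * x) * ((-(r : ℂ) * -x) ^ n / n !) by rw [mul_pow]; ring, neg_mul_neg,
    mul_pow]
  ring

theorem hasFPowerSeriesOnBall_laplace (hf : Measurable f) {b : ℂ} {ρ : ℝ} (hρ : 0 < ρ)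
    (h : IntegrableOn (fun x => f x * Real.exp (-(b.re - ρ) * x)) (Ioi 0)) :
    HasFPowerSeriesOnBall (laplace f) (laplaceSeries f b) b (ENNReal.ofReal ρ) := by
  rw [← mul_exp_neg_mul_mul_exp] at h
  set u : ℝ → ℝ := fun x => f x * Real.exp (-b.re * x)
  obtain ⟨hmom, hsum⟩ := integrableOn_mul_pow_and_summable_of_integrableOn_mul_exp
    (by fun_prop) measurableSet_Ioi Ioi_subset_Ici_self hρ h
  have hnorm : ∀ n, ∀ᵐ x ∂volume.restrict (Ioi 0),
      ‖(f x : ℂ) * Complex.exp (-b * x) * ((-x : ℂ) ^ n / n !)‖ = |u x| * x ^ n / n ! :=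
    fun n => ae_restrict_of_forall_mem measurableSet_Ioi fun x hx =>
      norm_laplaceSeries_integrand b (le_of_lt hx) n
  have habs_mom : ∀ n, IntegrableOn (fun x => |u x| * x ^ n) (Ioi 0) := fun n =>
    IntegrableOn.congr_fun (hmom n).norm (fun x hx => by
      rw [norm_mul, norm_pow, Real.norm_eq_abs, Real.norm_of_nonneg (le_of_lt hx)])
      measurableSet_Ioi
  have hint : ∀ n, IntegrableOn
      (fun x => (f x : ℂ) * Complex.exp (-b * x) * ((-x : ℂ) ^ n / n !)) (Ioi 0) := fun n =>
    ((habs_mom n).div_const _).mono' (by fun_prop) ((hnorm n).mono fun x hx => hx.le)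
  have hint_norm : ∀ n,
      ∫ x in Ioi 0, ‖(f x : ℂ) * Complex.exp (-b * x) * ((-x : ℂ) ^ n / n !)‖ =
        (∫ x in Ioi 0, |u x| * x ^ n) / n ! := by
    intro n
    rw [integral_congr_ae (hnorm n), integral_div]
  refine ⟨?_, ENNReal.ofReal_pos.2 hρ, fun {y} hy => ?_⟩
  · rw [show ENNReal.ofReal ρ = ((ρ.toNNReal : ℝ≥0) : ℝ≥0∞) from rfl]
    refine FormalMultilinearSeries.le_radius_of_summable _
      (hsum.of_nonneg_of_le (fun n => by positivity) fun n => ?_)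
    rw [Real.coe_toNNReal _ hρ.le, laplaceSeries, ContinuousMultilinearMap.norm_mkPiRing]
    calc _ ≤ (∫ x in Ioi 0, ‖(f x : ℂ) * Complex.exp (-b * x) * ((-x : ℂ) ^ n / n !)‖) *
            ρ ^ n := by
          gcongr
          exact norm_integral_le_integral_norm _
      _ = _ := by
          rw [hint_norm]
          ring
  · have hy' : ‖y‖ < ρ := by simpa using hy
    have hsum_norm : Summable fun n => ∫ x in Ioi 0,
        ‖y ^ n * ((f x : ℂ) * Complex.exp (-b * x) * ((-x : ℂ) ^ n / n !))‖ := by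
      refine hsum.of_nonneg_of_le (fun n => integral_nonneg fun _ => norm_nonneg _) fun n => ?_
      simp_rw [norm_mul (y ^ n), norm_pow]
      rw [integral_const_mul, hint_norm]
      have : 0 ≤ ∫ x in Ioi 0, |u x| * x ^ n :=
        setIntegral_nonneg measurableSet_Ioi fun x hx => by
          have : (0 : ℝ) < x := hx
          positivity
      calc _ ≤ ρ ^ n * ((∫ x in Ioi 0, |u x| * x ^ n) / n !) := by gcongr
        _ = _ := by ring
    have hlaplace : laplace f (b + y) = ∫ x in Ioi 0,
        ∑' n : ℕ, y ^ n * ((f x : ℂ) * Complex.exp (-b * x) * ((-x : ℂ) ^ n / n !)) := by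
      rw [laplace]
      congr 1
      ext x
      exact (hasSum_laplaceSeries_integrand b y x).tsum_eq.symm
    simp only [laplaceSeries_apply_eq_integral, hlaplace]
    exact hasSum_integral_of_summable_integral_norm (fun n => (hint n).const_mul _) hsum_norm

theorem exists_lt_integrableOn_mul_exp_of_differentiableOn (hf : Measurable f)
    {x₀ σc : ℝ} (hx₀ : 0 ≤ x₀) (hpos : ∀ x, x₀ < x → 0 ≤ f x)
    (hloc : IntegrableOn f (Ioc 0 x₀))
    (hint : ∀ σ, σc < σ → IntegrableOn (fun x => f x * Real.exp (-σ * x)) (Ioi 0))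
    {g : ℂ → ℂ} {U : Set ℂ} (hU : IsOpen U) (hσU : (σc : ℂ) ∈ U)
    (hg : DifferentiableOn ℂ g U) (hgF : ∀ s ∈ U, σc < s.re → g s = laplace f s) :
    ∃ σ < σc, IntegrableOn (fun x => f x * Real.exp (-σ * x)) (Ioi 0) := by
  obtain ⟨δ, hδ, hball⟩ := Metric.isOpen_iff.1 hU _ hσU
  set ε := δ / 4 with hε
  have hε₀ : 0 < ε := by positivity
  set a : ℝ := σc + ε with ha
  have hdist : dist (a : ℂ) σc = ε := by
    rw [Complex.dist_eq, ha, Complex.ofReal_add, add_sub_cancel_left, Complex.norm_real,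
      Real.norm_of_nonneg hε₀.le]
  have hnear : HasFPowerSeriesOnBall g (laplaceSeries f a) a (ENNReal.ofReal (ε / 2)) := by
    refine (hasFPowerSeriesOnBall_laplace hf (by positivity) (hint _ ?_)).congr fun z hz => ?_
    · simp only [Complex.ofReal_re]
      linarith
    rw [Metric.mem_eball, edist_dist, ENNReal.ofReal_lt_ofReal_iff (by positivity)] at hz
    have hzU : z ∈ U := hball (by
      rw [Metric.mem_ball]
      linarith [dist_triangle z a σc])
    refine (hgF z hzU ?_).symm
    have := (Complex.abs_re_le_norm (z - a)).trans_lt (Complex.dist_eq z a ▸ hz)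
    rw [Complex.sub_re, Complex.ofReal_re, abs_lt] at this
    linarith
  have hfar : HasFPowerSeriesOnBall g (cauchyPowerSeries g a (2 * ε).toNNReal) a
      (ENNReal.ofReal (2 * ε)) := by
    refine DifferentiableOn.hasFPowerSeriesOnBall (hg.mono fun z hz => hball ?_)
      (by simpa using hε₀)
    rw [Metric.mem_closedBall, Real.coe_toNNReal _ (by positivity)] at hz
    rw [Metric.mem_ball]
    linarith [dist_triangle z a σc]
  -- `g` is holomorphic on the closed disc of radius `2ε` about `a`, so the Taylor series of
  -- `laplace f` at `a` converges at the real point `a - r < σc`.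
  set r : ℝ := 3 * ε / 2 with hr
  have hsum := ((hnear.exchange_radius hfar).hasSum (y := -(r : ℂ)) (by
    rw [Metric.mem_eball, edist_zero_right, ← ofReal_norm,
      ENNReal.ofReal_lt_ofReal_iff (by positivity), norm_neg, Complex.norm_real,
      Real.norm_of_nonneg (by positivity)]
    linarith)).summable
  simp only [laplaceSeries_apply_neg_ofReal, Complex.summable_ofReal] at hsum
  refine ⟨a - r, by linarith, ?_⟩
  rw [← mul_exp_neg_mul_mul_exp]
  refine integrableOn_Ioi_mul_exp_of_summable (by fun_prop) hx₀
    (fun x hx => mul_nonneg (hpos x hx) (Real.exp_pos _).le) (by positivity) ?_ ?_ hsum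
  · rw [mul_exp_neg_mul_mul_exp, integrableOn_Ioc_mul_exp_iff]
    exact hloc
  · refine (integrableOn_mul_pow_and_summable_of_integrableOn_mul_exp (r := ε / 2)
      (by fun_prop) measurableSet_Ioi Ioi_subset_Ici_self (by positivity) ?_).1
    rw [mul_exp_neg_mul_mul_exp]
    exact hint _ (by linarith)

theorem exists_lt_tendsto_intervalIntegral_of_nonneg (hf : Measurable f) {x₀ σc : ℝ}
    (hx₀ : 0 ≤ x₀) (hpos : ∀ x, x₀ < x → 0 ≤ f x)
    (hconv : ∀ σ, σc < σ → ∃ I,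
      Tendsto (fun T => ∫ x in (0 : ℝ)..T, f x * Real.exp (-σ * x)) atTop (𝓝 I))
    {g : ℂ → ℂ} {U : Set ℂ} (hU : IsOpen U) (hσU : (σc : ℂ) ∈ U)
    (hg : DifferentiableOn ℂ g U) (hglim : ∀ s ∈ U, σc < s.re →
      Tendsto (fun T => ∫ x in (0 : ℝ)..T, (f x : ℂ) * Complex.exp (-s * x)) atTop
        (𝓝 (g s))) :
    ∃ σ < σc, ∃ I,
      Tendsto (fun T => ∫ x in (0 : ℝ)..T, f x * Real.exp (-σ * x)) atTop (𝓝 I) := by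
  by_cases hloc : ∀ T, IntegrableOn f (Ioc 0 T)
  swap
  · -- Past `T₀` every interval integral is the junk value `0`, so they all converge.
    obtain ⟨T₀, hT₀⟩ := not_forall.1 hloc
    exact ⟨σc - 1, by linarith, 0,
      tendsto_intervalIntegral_mul_exp_of_not_integrableOn hT₀ _⟩
  have hint : ∀ σ, σc < σ → IntegrableOn (fun x => f x * Real.exp (-σ * x)) (Ioi 0) :=
    fun σ hσ => (hconv σ hσ).elim fun _ hI =>
      integrableOn_Ioi_of_tendsto_intervalIntegral_of_nonneg
        (fun T => integrableOn_Ioc_mul_exp_iff.2 (hloc T)) hx₀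
        (fun x hx => mul_nonneg (hpos x hx) (Real.exp_pos _).le) hI
  obtain ⟨σ, hσ, hσint⟩ := exists_lt_integrableOn_mul_exp_of_differentiableOn hf hx₀ hpos
    (hloc x₀) hint hU hσU hg fun s hs hre =>
      tendsto_nhds_unique (hglim s hs hre) (tendsto_intervalIntegral_laplace hf (hint _ hre))
  exact ⟨σ, hσ, _, intervalIntegral_tendsto_integral_Ioi 0 hσint tendsto_id⟩

end Laplace

theorem stmt_10_general (f : ℝ → ℝ) (hmeas : Measurable f)
    (hsign : ∃ x₀ : ℝ, 0 < x₀ ∧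
      ((∀ x : ℝ, x₀ < x → 0 ≤ f x) ∨ (∀ x : ℝ, x₀ < x → f x ≤ 0)))
    (σc : ℝ)
    (hconv : ∀ σ : ℝ, σc < σ → ∃ I : ℝ,
      Filter.Tendsto (fun T : ℝ => ∫ x in (0:ℝ)..T, f x * Real.exp (-σ * x))
        Filter.atTop (nhds I))
    (hdiv : ∀ σ : ℝ, σ < σc → ¬ ∃ I : ℝ,
      Filter.Tendsto (fun T : ℝ => ∫ x in (0:ℝ)..T, f x * Real.exp (-σ * x))
        Filter.atTop (nhds I)) :
    ¬ ∃ (g : ℂ → ℂ) (U : Set ℂ), IsOpen U ∧ (σc : ℂ) ∈ U ∧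
      (∀ z ∈ U, AnalyticAt ℂ g z) ∧
      ∀ s : ℂ, s ∈ U → σc < s.re →
        Filter.Tendsto (fun T : ℝ => ∫ x in (0:ℝ)..T, (f x : ℂ) * Complex.exp (-s * x))
          Filter.atTop (nhds (g s)) := by
  rintro ⟨g, U, hU, hσU, hg, hglim⟩
  have hgd : DifferentiableOn ℂ g U := fun z hz =>
    (hg z hz).differentiableAt.differentiableWithinAt
  obtain ⟨x₀, hx₀, hpos | hneg⟩ := hsign
  · obtain ⟨σ, hσ, hσconv⟩ :=
      exists_lt_tendsto_intervalIntegral_of_nonneg hmeas hx₀.le hpos hconv hU hσU hgd hglim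
    exact hdiv σ hσ hσconv
  · obtain ⟨σ, hσ, I, hI⟩ := exists_lt_tendsto_intervalIntegral_of_nonneg (f := -f) hmeas.neg
      hx₀.le (fun x hx => neg_nonneg.2 (hneg x hx))
      (fun σ hσ => (hconv σ hσ).elim fun I hI => ⟨-I, by simpa using hI.neg⟩)
      hU hσU hgd.neg
      (fun s hs hre => by simpa using (hglim s hs hre).neg)
    exact hdiv σ hσ ⟨-I, by simpa using hI.neg⟩

theorem stmt_10 (f : ℝ → ℝ) (hmeas : Measurable f)
    (hloc : MeasureTheory.LocallyIntegrableOn f (Set.Ioi 0))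
    (hsign : ∃ x₀ : ℝ, 0 < x₀ ∧
      ((∀ x : ℝ, x₀ < x → 0 ≤ f x) ∨ (∀ x : ℝ, x₀ < x → f x ≤ 0)))
    (σc : ℝ)
    (hconv : ∀ σ : ℝ, σc < σ → ∃ I : ℝ,
      Filter.Tendsto (fun T : ℝ => ∫ x in (0:ℝ)..T, f x * Real.exp (-σ * x))
        Filter.atTop (nhds I))
    (hdiv : ∀ σ : ℝ, σ < σc → ¬ ∃ I : ℝ,
      Filter.Tendsto (fun T : ℝ => ∫ x in (0:ℝ)..T, f x * Real.exp (-σ * x))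
        Filter.atTop (nhds I)) :
    ¬ ∃ (g : ℂ → ℂ) (U : Set ℂ), IsOpen U ∧ (σc : ℂ) ∈ U ∧
      (∀ z ∈ U, AnalyticAt ℂ g z) ∧
      ∀ s : ℂ, s ∈ U → σc < s.re →
        Filter.Tendsto (fun T : ℝ => ∫ x in (0:ℝ)..T, (f x : ℂ) * Complex.exp (-s * x))
          Filter.atTop (nhds (g s)) :=
  stmt_10_general f hmeas hsign σc hconv hdiv
end

section
/- Let h : ℝ₊ˣ → ℂ be measurable with h(x) = O(x^a) as x → +∞ and h(x) = O(x^{-a}) as x → 0⁺ for some a ≥ 0 (polynomial growth at both ends). Let f : ℝ₊ˣ → ℂ be a function such that x^m f^{(n)}(x) is bounded for all m ∈ ℤ and n ∈ ℕ (f lies in the strong Schwartz space on ℝ₊ˣ). Define h⁺(x) = h(x) for x < 1 and 0 for x ≥ 1, and suppose the multiplicative convolution (f ∗ h)(x) = ∫₀^∞ f(x/y) h(y) dy/y vanishes identically. Then (f ∗ h⁺)(x) is of rapid decay both as x → 0⁺ and x → +∞, i.e. for every A > 0, (f ∗ h⁺)(x) = O(x^A) as x → 0⁺ and O(x^{-A})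 as x → +∞; consequently its Mellin transform ∫₀^∞ (f ∗ h⁺)(x) x^{s-1} dx is an entire function of s. -/
open MeasureTheory Set Filter Asymptotics Real Topology

theorem stmt_14 (h f : ℝ → ℂ)
    (hmeas : Measurable h)
    (hgrow : ∃ a : ℝ, 0 ≤ a ∧ (∃ C : ℝ, ∀ x : ℝ, 1 ≤ x → ‖h x‖ ≤ C * x ^ a) ∧
      (∃ C : ℝ, ∀ x ∈ Set.Ioc (0:ℝ) 1, ‖h x‖ ≤ C * x ^ (-a)))
    (hsmooth : ContDiffOn ℝ (⊤ : ℕ∞) f (Set.Ioi 0))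
    (hschwartz : ∀ (m : ℤ) (k : ℕ), ∃ C : ℝ, ∀ x : ℝ, 0 < x →
      x ^ m * ‖iteratedDerivWithin k f (Set.Ioi 0) x‖ ≤ C)
    (hconvint : ∀ x : ℝ, 0 < x →
      MeasureTheory.IntegrableOn (fun y : ℝ => f (x/y) * h y / (y:ℂ)) (Set.Ioi 0))
    (hconv : ∀ x : ℝ, 0 < x → ∫ y in Set.Ioi (0:ℝ), f (x/y) * h y / (y:ℂ) = 0)
    (hplus : ℝ → ℂ) (hplusdef : ∀ y : ℝ, hplus y = if y < 1 then h y else 0) :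
    (∀ A : ℝ, 0 < A →
      (∃ C : ℝ, ∀ x ∈ Set.Ioc (0:ℝ) 1,
        ‖∫ y in Set.Ioi (0:ℝ), f (x/y) * hplus y / (y:ℂ)‖ ≤ C * x ^ A) ∧
      (∃ C : ℝ, ∀ x : ℝ, 1 ≤ x →
        ‖∫ y in Set.Ioi (0:ℝ), f (x/y) * hplus y / (y:ℂ)‖ ≤ C * x ^ (-A))) ∧
    ∃ g : ℂ → ℂ, Differentiable ℂ g ∧ ∀ s : ℂ,
      g s = ∫ x in Set.Ioi (0:ℝ),
        (∫ y in Set.Ioi (0:ℝ), f (x/y) * hplus y / (y:ℂ)) * (x:ℂ) ^ (s-1) := by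
  obtain ⟨a, ha0, ⟨C1, hC1⟩, ⟨C2, hC2⟩⟩ := hgrow
  have hC1' : 0 ≤ C1 := by
    have := hC1 1 le_rfl
    rw [Real.one_rpow, mul_one] at this
    exact (norm_nonneg _).trans this
  have hC2' : 0 ≤ C2 := by
    have := hC2 1 ⟨zero_lt_one, le_rfl⟩
    rw [Real.one_rpow, mul_one] at this
    exact (norm_nonneg _).trans this
  have hplus_meas : Measurable hplus := by
    have he : hplus = fun y => if y < 1 then h y else 0 := funext hplusdef
    rw [he]
    exact Measurable.ite measurableSet_Iio hmeas measurable_const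
  -- rapid decay of f
  have hfd : ∀ M : ℤ, ∃ C : ℝ, 0 ≤ C ∧ ∀ t : ℝ, 0 < t → ‖f t‖ ≤ C * t ^ (-(M:ℝ)) := by
    intro M
    obtain ⟨C, hC⟩ := hschwartz M 0
    simp only [iteratedDerivWithin_zero] at hC
    refine ⟨C, ?_, fun t ht => ?_⟩
    · have := hC 1 one_pos
      rw [one_zpow, one_mul] at this
      exact (norm_nonneg _).trans this
    · have hp : (0:ℝ) < t ^ M := zpow_pos ht M
      rw [Real.rpow_neg ht.le, Real.rpow_intCast, ← div_eq_mul_inv, le_div_iff₀ hp, mul_comm]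
      exact hC t ht
  -- norm of the integrand
  have hnormeq : ∀ (u : ℂ) (y : ℝ), 0 < y → ‖u * h y / (y:ℂ)‖ = ‖u‖ * ‖h y‖ / y := by
    intro u y hy
    rw [norm_div, norm_mul, Complex.norm_real, Real.norm_eq_abs, abs_of_pos hy]
  -- bound near zero, via the convolution identity
  have bound_small : ∀ M : ℤ, a < (M:ℝ) → ∃ C : ℝ, 0 ≤ C ∧ ∀ x ∈ Set.Ioc (0:ℝ) 1,
      ‖∫ y in Set.Ioi (0:ℝ), f (x/y) * hplus y / (y:ℂ)‖ ≤ C * x ^ (M:ℝ) := by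
    intro M hM
    obtain ⟨Cf, hCf0, hCf⟩ := hfd (-M)
    have hCf' : ∀ t : ℝ, 0 < t → ‖f t‖ ≤ Cf * t ^ (M:ℝ) := by
      intro t ht
      have := hCf t ht
      rwa [Int.cast_neg, neg_neg] at this
    have hr : a - (M:ℝ) - 1 < -1 := by linarith
    have hint : IntegrableOn (fun y : ℝ => y ^ (a - (M:ℝ) - 1)) (Ici 1) :=
      (integrableOn_Ioi_rpow_of_lt hr zero_lt_one).congr_set_ae Ioi_ae_eq_Ici.symm
    have hI2 : 0 ≤ ∫ y in Ici (1:ℝ), y ^ (a - (M:ℝ) - 1) :=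
      setIntegral_nonneg measurableSet_Ici fun y hy =>
        Real.rpow_nonneg (le_trans zero_le_one hy) _
    refine ⟨Cf * C1 * ∫ y in Ici (1:ℝ), y ^ (a - (M:ℝ) - 1), by positivity, fun x hx => ?_⟩
    obtain ⟨hx0, hx1⟩ := hx
    have hGint : IntegrableOn (fun y : ℝ => f (x/y) * h y / (y:ℂ)) (Set.Ioi 0) := hconvint x hx0
    have hsplit : (Ioo (0:ℝ) 1) ∪ Ici 1 = Ioi 0 := by
      ext y
      simp only [mem_union, mem_Ioo, mem_Ici, mem_Ioi]
      constructor
      · rintro (⟨h1, _⟩ | h1)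
        · exact h1
        · linarith
      · intro hy
        rcases lt_or_ge y 1 with hlt | hle
        exacts [Or.inl ⟨hy, hlt⟩, Or.inr hle]
    have hdisj : Disjoint (Ioo (0:ℝ) 1) (Ici 1) := by
      rw [Set.disjoint_left]
      rintro y ⟨_, h2⟩ h3
      exact absurd h3 (not_le.mpr h2)
    have hsum : (∫ y in Ioo (0:ℝ) 1, f (x/y) * h y / (y:ℂ))
        + ∫ y in Ici (1:ℝ), f (x/y) * h y / (y:ℂ) = 0 := by
      rw [← setIntegral_union hdisj measurableSet_Ici
        (hGint.mono_set (by rw [← hsplit]; exact subset_union_left))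
        (hGint.mono_set (by rw [← hsplit]; exact subset_union_right)), hsplit]
      exact hconv x hx0
    have heq1 : ∫ y in Set.Ioi (0:ℝ), f (x/y) * hplus y / (y:ℂ)
        = ∫ y in Ioo (0:ℝ) 1, f (x/y) * h y / (y:ℂ) := by
      rw [show (Ioo (0:ℝ) 1) = Ioi 0 ∩ Iio 1 from (Set.Ioi_inter_Iio).symm,
        ← setIntegral_indicator measurableSet_Iio]
      refine setIntegral_congr_fun measurableSet_Ioi fun y hy => ?_
      by_cases hylt : y < 1
      · rw [hplusdef y, if_pos hylt, Set.indicator_of_mem (show y ∈ Iio 1 from hylt)]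
      · rw [hplusdef y, if_neg hylt, Set.indicator_of_notMem (show y ∉ Iio 1 from hylt)]
        simp
    have heq2 : ∫ y in Set.Ioi (0:ℝ), f (x/y) * hplus y / (y:ℂ)
        = -∫ y in Ici (1:ℝ), f (x/y) * h y / (y:ℂ) := by
      rw [heq1]
      exact eq_neg_of_add_eq_zero_left hsum
    rw [heq2, norm_neg]
    have hb : ∀ᵐ y ∂(volume.restrict (Ici (1:ℝ))),
        ‖f (x/y) * h y / (y:ℂ)‖ ≤ (Cf * C1 * x ^ (M:ℝ)) * y ^ (a - (M:ℝ) - 1) := by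
      refine (ae_restrict_iff' measurableSet_Ici).2 (ae_of_all _ fun y hy => ?_)
      have hy1 : (1:ℝ) ≤ y := hy
      have hy0 : (0:ℝ) < y := lt_of_lt_of_le zero_lt_one hy1
      have hxy : 0 < x / y := div_pos hx0 hy0
      have h1 : ‖f (x/y)‖ ≤ Cf * (x/y) ^ (M:ℝ) := hCf' _ hxy
      have h2 : ‖h y‖ ≤ C1 * y ^ a := hC1 y hy1
      rw [hnormeq _ y hy0]
      have hle : ‖f (x/y)‖ * ‖h y‖ / y ≤ (Cf * (x/y) ^ (M:ℝ)) * (C1 * y ^ a) / y := by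
        gcongr
      refine hle.trans (le_of_eq ?_)
      rw [Real.div_rpow hx0.le hy0.le, Real.rpow_sub hy0, Real.rpow_sub hy0, Real.rpow_one]
      have hyM : y ^ (M:ℝ) ≠ 0 := ne_of_gt (Real.rpow_pos_of_pos hy0 _)
      field_simp
    have hnn := norm_integral_le_of_norm_le (hint.const_mul (Cf * C1 * x ^ (M:ℝ))) hb
    refine hnn.trans ?_
    rw [integral_const_mul]
    exact le_of_eq (by ring)
  -- pointwise bound for the h⁺ integrand; used twice below
  have hpt : ∀ (M : ℤ) (Cf : ℝ), 0 ≤ Cf → (∀ t : ℝ, 0 < t → ‖f t‖ ≤ Cf * t ^ (-(M:ℝ))) →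
      ∀ x : ℝ, 0 < x → ∀ y : ℝ, 0 < y →
      ‖f (x/y) * hplus y / (y:ℂ)‖ ≤ Set.indicator (Set.Ioc (0:ℝ) 1)
        (fun y => (Cf * C2 * x ^ (-(M:ℝ))) * y ^ ((M:ℝ) - a - 1)) y := by
    intro M Cf hCf0 hCf x hx0 y hy0
    by_cases hylt : y < 1
    · rw [Set.indicator_of_mem (show y ∈ Set.Ioc (0:ℝ) 1 from ⟨hy0, hylt.le⟩), hplusdef y, if_pos hylt]
      have hxy : 0 < x / y := div_pos hx0 hy0
      have h1 : ‖f (x/y)‖ ≤ Cf * (x/y) ^ (-(M:ℝ)) := hCf _ hxy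
      have h2 : ‖h y‖ ≤ C2 * y ^ (-a) := hC2 y ⟨hy0, hylt.le⟩
      rw [hnormeq _ y hy0]
      have hle : ‖f (x/y)‖ * ‖h y‖ / y ≤ (Cf * (x/y) ^ (-(M:ℝ))) * (C2 * y ^ (-a)) / y := by
        gcongr
      refine hle.trans (le_of_eq ?_)
      rw [Real.div_rpow hx0.le hy0.le, Real.rpow_sub hy0, Real.rpow_sub hy0, Real.rpow_one,
        Real.rpow_neg hx0.le, Real.rpow_neg hy0.le, Real.rpow_neg hy0.le]
      have hyM : y ^ (M:ℝ) ≠ 0 := ne_of_gt (Real.rpow_pos_of_pos hy0 _)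
      have hya : y ^ a ≠ 0 := ne_of_gt (Real.rpow_pos_of_pos hy0 _)
      field_simp
    · rw [hplusdef y, if_neg hylt]
      simp only [mul_zero, zero_div, norm_zero, zero_mul]
      refine Set.indicator_nonneg (fun z hz => ?_) y
      have : (0:ℝ) ≤ z := hz.1.le
      positivity
  -- integrability of the dominating function
  have hdom : ∀ (c : ℝ) (M : ℤ), a < (M:ℝ) →
      Integrable (fun y => Set.indicator (Set.Ioc (0:ℝ) 1)
        (fun y => c * y ^ ((M:ℝ) - a - 1)) y) (volume.restrict (Set.Ioi 0)) := by
    intro c M hM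
    have hr : (-1:ℝ) < (M:ℝ) - a - 1 := by linarith
    have hint1 : IntegrableOn (fun y : ℝ => y ^ ((M:ℝ) - a - 1)) (Set.Ioc 0 1) :=
      ((intervalIntegral.integrableOn_Ioo_rpow_iff zero_lt_one).mpr hr).congr_set_ae Ioo_ae_eq_Ioc.symm
    exact (IntegrableOn.integrable_indicator (hint1.const_mul c) measurableSet_Ioc).restrict
  -- value of the integral of the dominating function
  have hdomval : ∀ (c : ℝ) (M : ℤ),
      ∫ y in Set.Ioi (0:ℝ), Set.indicator (Set.Ioc (0:ℝ) 1)
        (fun y => c * y ^ ((M:ℝ) - a - 1)) y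
      = c * ∫ y in Set.Ioc (0:ℝ) 1, y ^ ((M:ℝ) - a - 1) := by
    intro c M
    rw [setIntegral_indicator measurableSet_Ioc,
      show Set.Ioi (0:ℝ) ∩ Set.Ioc 0 1 = Set.Ioc 0 1 from
        Set.inter_eq_right.mpr (fun y hy => hy.1), integral_const_mul]
  -- bound at infinity, directly
  have bound_big : ∀ M : ℤ, a < (M:ℝ) → ∃ C : ℝ, 0 ≤ C ∧ ∀ x : ℝ, 1 ≤ x →
      ‖∫ y in Set.Ioi (0:ℝ), f (x/y) * hplus y / (y:ℂ)‖ ≤ C * x ^ (-(M:ℝ)) := by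
    intro M hM
    obtain ⟨Cf, hCf0, hCf⟩ := hfd M
    have hI1 : 0 ≤ ∫ y in Set.Ioc (0:ℝ) 1, y ^ ((M:ℝ) - a - 1) :=
      setIntegral_nonneg measurableSet_Ioc fun y hy => Real.rpow_nonneg hy.1.le _
    refine ⟨Cf * C2 * ∫ y in Set.Ioc (0:ℝ) 1, y ^ ((M:ℝ) - a - 1), by positivity, fun x hx => ?_⟩
    have hx0 : 0 < x := lt_of_lt_of_le zero_lt_one hx
    have hb : ∀ᵐ y ∂(volume.restrict (Set.Ioi (0:ℝ))),
        ‖f (x/y) * hplus y / (y:ℂ)‖ ≤ Set.indicator (Set.Ioc (0:ℝ) 1)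
          (fun y => (Cf * C2 * x ^ (-(M:ℝ))) * y ^ ((M:ℝ) - a - 1)) y :=
      (ae_restrict_iff' measurableSet_Ioi).2
        (ae_of_all _ fun y hy => hpt M Cf hCf0 hCf x hx0 y hy)
    have hnn := norm_integral_le_of_norm_le (hdom _ M hM) hb
    refine hnn.trans ?_
    rw [hdomval]
    exact le_of_eq (by ring)
  -- the decay statement
  have key : ∀ A : ℝ, 0 < A →
      (∃ C : ℝ, ∀ x ∈ Set.Ioc (0:ℝ) 1,
        ‖∫ y in Set.Ioi (0:ℝ), f (x/y) * hplus y / (y:ℂ)‖ ≤ C * x ^ A) ∧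
      (∃ C : ℝ, ∀ x : ℝ, 1 ≤ x →
        ‖∫ y in Set.Ioi (0:ℝ), f (x/y) * hplus y / (y:ℂ)‖ ≤ C * x ^ (-A)) := by
    intro A hA
    set M : ℤ := ⌈A⌉ + ⌈a⌉ + 1 with hMdef
    have hcA : A ≤ (⌈A⌉:ℝ) := Int.le_ceil A
    have hca : a ≤ (⌈a⌉:ℝ) := Int.le_ceil a
    have hcA0 : (0:ℝ) ≤ (⌈A⌉:ℝ) := by exact_mod_cast Int.ceil_nonneg hA.le
    have hca0 : (0:ℝ) ≤ (⌈a⌉:ℝ) := by exact_mod_cast Int.ceil_nonneg ha0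
    have hMa : a < (M:ℝ) := by
      rw [hMdef]
      push_cast
      linarith
    have hMA : A ≤ (M:ℝ) := by
      rw [hMdef]
      push_cast
      linarith
    obtain ⟨Cs, hCs0, hCs⟩ := bound_small M hMa
    obtain ⟨Cb, hCb0, hCb⟩ := bound_big M hMa
    constructor
    · exact ⟨Cs, fun x hx => (hCs x hx).trans (mul_le_mul_of_nonneg_left
        (Real.rpow_le_rpow_of_exponent_ge hx.1 hx.2 hMA) hCs0)⟩
    · exact ⟨Cb, fun x hx => (hCb x hx).trans (mul_le_mul_of_nonneg_left
        (Real.rpow_le_rpow_of_exponent_le hx (neg_le_neg hMA)) hCb0)⟩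
  refine ⟨key, ?_⟩
  -- the Mellin transform part
  set F : ℝ → ℂ := fun x => ∫ y in Set.Ioi (0:ℝ), f (x/y) * hplus y / (y:ℂ) with hFdef
  have hFcont : ContinuousOn F (Set.Ioi 0) := by
    set M : ℤ := ⌈a⌉ + 1 with hMdef
    have hMa : a < (M:ℝ) := by
      rw [hMdef]; push_cast; linarith [Int.le_ceil a]
    obtain ⟨Cf, hCf0, hCf⟩ := hfd M
    intro x₀ hx₀
    have hx₀0 : (0:ℝ) < x₀ := hx₀
    apply ContinuousAt.continuousWithinAt
    apply continuousAt_of_dominated (bound := fun y => Set.indicator (Set.Ioc (0:ℝ) 1)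
      (fun y => (Cf * C2 * (x₀/2) ^ (-(M:ℝ))) * y ^ ((M:ℝ) - a - 1)) y)
    · filter_upwards [Ioi_mem_nhds hx₀0] with x hx
      have hx0 : (0:ℝ) < x := hx
      have hcf : ContinuousOn (fun y : ℝ => f (x/y)) (Set.Ioi 0) := by
        refine ContinuousOn.comp hsmooth.continuousOn
          (continuousOn_const.div continuousOn_id fun y hy => ne_of_gt hy) fun y hy => ?_
        exact div_pos hx0 hy
      have h1 : AEStronglyMeasurable (fun y : ℝ => f (x/y) * hplus y)
          (volume.restrict (Set.Ioi 0)) :=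
        (hcf.aestronglyMeasurable measurableSet_Ioi).mul hplus_meas.aestronglyMeasurable
      have h2 : AEStronglyMeasurable (fun y : ℝ => ((y:ℂ))⁻¹)
          (volume.restrict (Set.Ioi 0)) :=
        (Complex.measurable_ofReal.inv).aestronglyMeasurable
      exact (h1.mul h2).congr (ae_of_all _ fun y => by simp only [Pi.mul_apply, div_eq_mul_inv])
    · filter_upwards [Ioo_mem_nhds (by linarith : x₀/2 < x₀) (by linarith : x₀ < x₀ + 1)]
        with x hx
      have hx0 : (0:ℝ) < x := lt_trans (by linarith) hx.1
      refine (ae_restrict_iff' measurableSet_Ioi).2 (ae_of_all _ fun y hy => ?_)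
      refine (hpt M Cf hCf0 hCf x hx0 y hy).trans ?_
      have hmono : x ^ (-(M:ℝ)) ≤ (x₀/2) ^ (-(M:ℝ)) := by
        rw [Real.rpow_neg hx0.le, Real.rpow_neg (by linarith : (0:ℝ) ≤ x₀/2)]
        have hbase : (x₀/2) ^ (M:ℝ) ≤ x ^ (M:ℝ) :=
          Real.rpow_le_rpow (by linarith) hx.1.le (by linarith)
        exact inv_anti₀ (Real.rpow_pos_of_pos (by linarith) _) hbase
      by_cases hmem : y ∈ Set.Ioc (0:ℝ) 1
      · rw [Set.indicator_of_mem hmem, Set.indicator_of_mem hmem]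
        have : (0:ℝ) ≤ y ^ ((M:ℝ) - a - 1) := Real.rpow_nonneg hmem.1.le _
        nlinarith [mul_le_mul_of_nonneg_left hmono (mul_nonneg hCf0 hC2')]
      · rw [Set.indicator_of_notMem hmem, Set.indicator_of_notMem hmem]
    · exact hdom _ M hMa
    · refine (ae_restrict_iff' measurableSet_Ioi).2 (ae_of_all _ fun y hy => ?_)
      have hy0 : (0:ℝ) < y := hy
      have h1 : ContinuousAt (fun x : ℝ => f (x/y)) x₀ := by
        have hf : ContinuousAt f (x₀ / y) :=
          hsmooth.continuousOn.continuousAt (Ioi_mem_nhds (div_pos hx₀0 hy0))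
        have hg : ContinuousAt (fun x : ℝ => x / y) x₀ :=
          continuousAt_id.div continuousAt_const (ne_of_gt hy0)
        show ContinuousAt (f ∘ fun x : ℝ => x / y) x₀
        exact ContinuousAt.comp (f := fun x : ℝ => x / y) (x := x₀) hf hg
      exact (h1.mul continuousAt_const).div_const _
  have hFloc : LocallyIntegrableOn F (Set.Ioi 0) :=
    hFcont.locallyIntegrableOn measurableSet_Ioi
  have hFtop : ∀ A : ℝ, 0 < A → F =O[atTop] fun x : ℝ => x ^ (-A) := by
    intro A hA
    obtain ⟨C, hC⟩ := (key A hA).2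
    rw [Asymptotics.isBigO_iff]
    refine ⟨C, ?_⟩
    filter_upwards [eventually_ge_atTop (1:ℝ)] with x hx
    have h1 := hC x hx
    rwa [Real.norm_of_nonneg (Real.rpow_nonneg (by linarith) _)]
  have hFbot : ∀ A : ℝ, 0 < A → F =O[𝓝[>] (0:ℝ)] fun x : ℝ => x ^ A := by
    intro A hA
    obtain ⟨C, hC⟩ := (key A hA).1
    rw [Asymptotics.isBigO_iff]
    refine ⟨C, ?_⟩
    filter_upwards [Ioc_mem_nhdsGT zero_lt_one] with x hx
    have h1 := hC x hx
    rwa [Real.norm_of_nonneg (Real.rpow_nonneg hx.1.le _)]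
  refine ⟨mellin F, fun s => ?_, fun s => ?_⟩
  · have hA1 : (0:ℝ) < max 1 (s.re + 1) := lt_of_lt_of_le zero_lt_one (le_max_left _ _)
    have hA2 : (0:ℝ) < max 1 (1 - s.re) := lt_of_lt_of_le zero_lt_one (le_max_left _ _)
    refine mellin_differentiableAt_of_isBigO_rpow (b := -(max 1 (1 - s.re))) hFloc (hFtop _ hA1) ?_ ?_ ?_
    · exact lt_of_lt_of_le (by linarith) (le_max_right 1 (s.re + 1))
    · show F =O[𝓝[>] (0:ℝ)] fun x : ℝ => x ^ (-(-(max 1 (1 - s.re))))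
      simpa using hFbot _ hA2
    · rcases le_or_gt 0 s.re with hs | hs
      · have : -(max 1 (1 - s.re)) ≤ -1 := neg_le_neg (le_max_left _ _)
        linarith
      · have : -(max 1 (1 - s.re)) ≤ -(1 - s.re) := neg_le_neg (le_max_right _ _)
        linarith
  · rw [mellin]
    refine setIntegral_congr_fun measurableSet_Ioi fun x hx => ?_
    rw [smul_eq_mul, mul_comm]
end
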